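/- arXiv:2010.02541 — 7 statements merged into one kernel-verified Lean document; each statement's English description precedes it below -/
import Mathlib

section
/- Let $\mathcal{A}$ be a finite family of finite sets of size at most $n$ on ground set $X$, and let $\mathcal{A}'\subseteq\mathcal{A}$. For a set $S\subseteq X$, let $\mathcal{A}(\bar S)$ denote the subfamily of sets in $\mathcal{A}$ disjoint from $S$. Then for any $\lambda>1$, $c_\lambda(\mathcal{A})\le\sum_{C\in\mathcal{C}(\mathcal{A}')}\lambda^{-|C|}c_\lambda(\mathcal{A}(\bar C))$, where $\mathcal{C}(\cdot)$ denotes the family of minimal covers of size at most $n$ and $c_\lambda(\mathcal{F})=\sum_{C\in\mathcal{C}(\mathcal{F})}\lambda^{-|C|}$. -/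
/-!
Split a minimal cover `C` of `𝓐` as `C' ∪ (C \ C')`, where `C'` is a minimal cover of `𝓐'`
contained in `C`: then `C \ C'` is a minimal cover of `𝓐(C̄')`, and it is disjoint from `C'`, so
`λ^{-|C|} = λ^{-|C'|} λ^{-|C \ C'|}`. Hence every term of `c_λ(𝓐)` appears, with the same weight,
among the nonnegative terms of the right-hand side, expanded as a sum over pairs `(C', D)`.
-/

open Finset

variable {α : Type*}

/-- `C` is a cover of the family `𝓕`: it intersects every member. -/
def IsCover [DecidableEq α] (C : Finset α) (𝓕 : Finset (Finset α)) : Prop :=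
  ∀ A ∈ 𝓕, (C ∩ A).Nonempty

/-- The family of all minimal covers of `𝓕` of size at most `n`. -/
noncomputable def minCovers [Fintype α] [DecidableEq α] (n : ℕ)
    (𝓕 : Finset (Finset α)) : Finset (Finset α) := by
  classical
  exact univ.filter (fun C => C.card ≤ n ∧ IsCover C 𝓕 ∧
    ∀ C' ⊆ C, IsCover C' 𝓕 → C' = C)

/-- `c_λ(𝓕) = ∑_{C ∈ 𝓒(𝓕)} λ^{-|C|}`. -/
noncomputable def covWeight [Fintype α] [DecidableEq α] (n : ℕ) (lam : ℝ)
    (𝓕 : Finset (Finset α)) : ℝ :=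
  ∑ C ∈ minCovers n 𝓕, lam ^ (-(C.card : ℤ))

/-- The covering number `τ(𝓕)`: minimum size of a cover. -/
noncomputable def covNum [DecidableEq α] (𝓕 : Finset (Finset α)) : ℕ :=
  sInf {k | ∃ C : Finset α, C.card = k ∧ IsCover C 𝓕}

section

variable [DecidableEq α]

def IsMinCover (C : Finset α) (𝓕 : Finset (Finset α)) : Prop :=
  IsCover C 𝓕 ∧ ∀ C' ⊆ C, IsCover C' 𝓕 → C' = C

lemma IsCover.mono {C : Finset α} {𝓐 𝓐' : Finset (Finset α)} (hC : IsCover C 𝓐)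
    (hsub : 𝓐' ⊆ 𝓐) : IsCover C 𝓐' :=
  fun A hA => hC A (hsub hA)

lemma IsCover.exists_isMinCover_subset {C : Finset α} {𝓕 : Finset (Finset α)}
    (hC : IsCover C 𝓕) : ∃ C' ⊆ C, IsMinCover C' 𝓕 := by
  classical
  obtain ⟨C', hC'S, hmin⟩ :=
    (C.powerset.filter (IsCover · 𝓕)).exists_min_image card ⟨C, by simp [hC]⟩
  rw [mem_filter, mem_powerset] at hC'S
  refine ⟨C', hC'S.1, hC'S.2, fun D hD hDcov => eq_of_subset_of_card_le hD (hmin D ?_)⟩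
  rw [mem_filter, mem_powerset]
  exact ⟨hD.trans hC'S.1, hDcov⟩

lemma IsCover.sdiff_filter_disjoint {C : Finset α} {𝓐 : Finset (Finset α)} (hC : IsCover C 𝓐)
    (S : Finset α) : IsCover (C \ S) (𝓐.filter fun F => Disjoint F S) := by
  intro A hA
  rw [mem_filter] at hA
  obtain ⟨x, hx⟩ := hC A hA.1
  rw [mem_inter] at hx
  exact ⟨x, mem_inter.2 ⟨mem_sdiff.2 ⟨hx.1, disjoint_left.1 hA.2 hx.2⟩, hx.2⟩⟩

lemma IsCover.union_of_filter_disjoint {D S : Finset α} {𝓐 : Finset (Finset α)}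
    (hD : IsCover D (𝓐.filter fun F => Disjoint F S)) : IsCover (S ∪ D) 𝓐 := by
  intro A hA
  by_cases hSA : Disjoint A S
  · exact (hD A (mem_filter.2 ⟨hA, hSA⟩)).mono (inter_subset_inter_right subset_union_right)
  · obtain ⟨x, hxA, hxS⟩ := not_disjoint_iff.1 hSA
    exact ⟨x, mem_inter.2 ⟨mem_union_left D hxS, hxA⟩⟩

lemma IsMinCover.sdiff {C S : Finset α} {𝓐 : Finset (Finset α)} (hC : IsMinCover C 𝓐)
    (hS : S ⊆ C) : IsMinCover (C \ S) (𝓐.filter fun F => Disjoint F S) := by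
  refine ⟨hC.1.sdiff_filter_disjoint S, fun D hD hDcov => subset_antisymm hD ?_⟩
  have hSD : S ∪ D = C :=
    hC.2 _ (union_subset hS (hD.trans sdiff_subset)) hDcov.union_of_filter_disjoint
  intro x hx
  rw [mem_sdiff, ← hSD, mem_union] at hx
  exact hx.1.resolve_left hx.2

lemma IsMinCover.disjoint_of_filter_disjoint {D S : Finset α} {𝓐 : Finset (Finset α)}
    (hD : IsMinCover D (𝓐.filter fun F => Disjoint F S)) : Disjoint S D := by
  have hcov : IsCover (D \ S) (𝓐.filter fun F => Disjoint F S) := by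
    simpa only [filter_filter, and_self] using hD.1.sdiff_filter_disjoint S
  exact disjoint_comm.1 (sdiff_eq_self_iff_disjoint.1 (hD.2 _ sdiff_subset hcov))

lemma mem_minCovers [Fintype α] {n : ℕ} {C : Finset α} {𝓕 : Finset (Finset α)} :
    C ∈ minCovers n 𝓕 ↔ C.card ≤ n ∧ IsMinCover C 𝓕 := by
  simp [minCovers, IsMinCover]

lemma minCovers_subset_image_union [Fintype α] (n : ℕ) {𝓐 𝓐' : Finset (Finset α)}
    (hsub : 𝓐' ⊆ 𝓐) :
    minCovers n 𝓐 ⊆ ((minCovers n 𝓐').sigma fun C' =>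
      minCovers n (𝓐.filter fun F => Disjoint F C')).image fun p => p.1 ∪ p.2 := by
  intro C hC
  rw [mem_minCovers] at hC
  obtain ⟨C', hC'C, hC'⟩ := (hC.2.1.mono hsub).exists_isMinCover_subset
  refine mem_image.2 ⟨⟨C', C \ C'⟩, mem_sigma.2 ⟨?_, ?_⟩, union_sdiff_of_subset hC'C⟩
  · exact mem_minCovers.2 ⟨(card_le_card hC'C).trans hC.1, hC'⟩
  · exact mem_minCovers.2 ⟨(card_le_card sdiff_subset).trans hC.1, hC.2.sdiff hC'C⟩

end

theorem stmt1_general [Fintype α] [DecidableEq α] (n : ℕ) (𝓐 𝓐' : Finset (Finset α))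
    (hsub : 𝓐' ⊆ 𝓐) (lam : ℝ) (hl : 1 < lam) :
    covWeight n lam 𝓐 ≤ ∑ C ∈ minCovers n 𝓐',
      lam ^ (-(C.card : ℤ)) * covWeight n lam (𝓐.filter (fun F => Disjoint F C)) := by
  have hlam : lam ≠ 0 := (zero_lt_one.trans hl).ne'
  set T := (minCovers n 𝓐').sigma fun C' => minCovers n (𝓐.filter fun F => Disjoint F C')
  calc covWeight n lam 𝓐
      ≤ ∑ C ∈ T.image (fun p => p.1 ∪ p.2), lam ^ (-(C.card : ℤ)) :=
        sum_le_sum_of_subset_of_nonneg (minCovers_subset_image_union n hsub)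
          fun _ _ _ => by positivity
    _ ≤ ∑ p ∈ T, lam ^ (-((p.1 ∪ p.2).card : ℤ)) :=
        sum_image_le_of_nonneg fun _ _ => by positivity
    _ = ∑ p ∈ T, lam ^ (-(p.1.card : ℤ)) * lam ^ (-(p.2.card : ℤ)) := by
        refine sum_congr rfl fun p hp => ?_
        have hdisj := (mem_minCovers.1 (mem_sigma.1 hp).2).2.disjoint_of_filter_disjoint
        rw [card_union_of_disjoint hdisj, Nat.cast_add, neg_add, zpow_add₀ hlam]
    _ = _ := by simp only [T, sum_sigma, covWeight, mul_sum]

theorem stmt1 [Fintype α] [DecidableEq α] (n : ℕ) (𝓐 𝓐' : Finset (Finset α))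
    (hA : ∀ A ∈ 𝓐, A.card ≤ n) (hsub : 𝓐' ⊆ 𝓐) (lam : ℝ) (hl : 1 < lam) :
    covWeight n lam 𝓐 ≤ ∑ C ∈ minCovers n 𝓐',
      lam ^ (-(C.card : ℤ)) * covWeight n lam (𝓐.filter (fun F => Disjoint F C)) :=
  stmt1_general n 𝓐 𝓐' hsub lam hl
end

section
/- Let $\mathcal{F}$ be a finite family of nonempty finite sets each of size at most $n$ (with $n\ge 1$). Then $c_n(\mathcal{F})=\sum_{C\in\mathcal{C}(\mathcal{F})}n^{-|C|}\le 1$, where $\mathcal{C}(\mathcal{F})$ is the family of minimal covers of $\mathcal{F}$ of size at most $n$. -/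
/-!
Induction on `𝓕`. Fix a member `A`: every minimal cover meets `A`, so `c(𝓕)` is at most
`∑_{x ∈ A}` of the weight of the minimal covers containing `x`. Deleting `x` maps those covers
injectively to minimal covers of the smaller family `{B ∈ 𝓕 | x ∉ B}` and multiplies the weight
by `λ`, so by induction each inner sum is at most `λ⁻¹`, whence `c(𝓕) ≤ |A| / λ ≤ 1`.
-/

open Finset

variable {α : Type*}

namespace IsCover

variable [DecidableEq α] {𝓕 : Finset (Finset α)} {C : Finset α}

lemma filter_notMem_erase (hC : IsCover C 𝓕) (x : α) :
    IsCover (C.erase x) {B ∈ 𝓕 | x ∉ B} := by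
  intro B hB
  rw [mem_filter] at hB
  obtain ⟨y, hyC, hyB⟩ := (hC B hB.1).exists_mem.imp fun _ => mem_inter.1
  exact ⟨y, mem_inter.2 ⟨mem_erase.2 ⟨fun h => hB.2 (h ▸ hyB), hyC⟩, hyB⟩⟩

lemma insert_of_filter_notMem {x : α} (hC : IsCover C {B ∈ 𝓕 | x ∉ B}) :
    IsCover (insert x C) 𝓕 := by
  intro B hB
  by_cases hxB : x ∈ B
  · exact ⟨x, mem_inter.2 ⟨mem_insert_self _ _, hxB⟩⟩
  · exact (hC B (mem_filter.2 ⟨hB, hxB⟩)).mono (inter_subset_inter_right (subset_insert _ _))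

end IsCover

section minCovers

variable [Fintype α] [DecidableEq α] {n : ℕ} {𝓕 : Finset (Finset α)} {C : Finset α}

@[simp]
lemma mem_minCovers_s2 :
    C ∈ minCovers n 𝓕 ↔ C.card ≤ n ∧ IsCover C 𝓕 ∧ ∀ C' ⊆ C, IsCover C' 𝓕 → C' = C := by
  classical
  simp [minCovers]

lemma minCovers_empty : minCovers n (∅ : Finset (Finset α)) = {∅} := by
  ext C
  have hcov : ∀ D : Finset α, IsCover D ∅ := fun _ _ h => absurd h (notMem_empty _)
  simp only [mem_minCovers_s2, mem_singleton]
  constructor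
  · rintro ⟨-, -, hmin⟩
    exact (hmin ∅ (empty_subset _) (hcov ∅)).symm
  · rintro rfl
    exact ⟨Nat.zero_le n, hcov ∅, fun _ h _ => subset_empty.1 h⟩

lemma erase_mem_minCovers_filter_notMem {x : α} (hC : C ∈ minCovers n 𝓕) (hx : x ∈ C) :
    C.erase x ∈ minCovers n {B ∈ 𝓕 | x ∉ B} := by
  obtain ⟨hCn, hCcov, hCmin⟩ := mem_minCovers_s2.1 hC
  refine mem_minCovers_s2.2 ⟨(card_le_card (erase_subset _ _)).trans hCn,
    hCcov.filter_notMem_erase x, fun D hD hDcov => ?_⟩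
  have hxD : x ∉ D := fun h => (mem_erase.1 (hD h)).1 rfl
  have hDC : insert x D ⊆ C := insert_subset hx (hD.trans (erase_subset _ _))
  rw [← hCmin _ hDC hDcov.insert_of_filter_notMem, erase_insert hxD]

end minCovers

lemma zpow_neg_card_eq_inv_mul_erase [DecidableEq α] {lam : ℝ} {C : Finset α} {x : α}
    (hx : x ∈ C) :
    lam ^ (-(C.card : ℤ)) = lam⁻¹ * lam ^ (-((C.erase x).card : ℤ)) := by
  rw [← card_erase_add_one hx]
  simp only [zpow_neg, zpow_natCast, pow_succ, mul_inv, mul_comm]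

section covWeight

variable [Fintype α] [DecidableEq α] {n : ℕ} {lam : ℝ}

lemma covWeight_le_sum_sum_mem (hlam : 0 ≤ lam) {𝓕 : Finset (Finset α)} {A : Finset α}
    (hA : A ∈ 𝓕) :
    covWeight n lam 𝓕 ≤
      ∑ x ∈ A, ∑ C ∈ minCovers n 𝓕 with x ∈ C, lam ^ (-(C.card : ℤ)) := by
  calc covWeight n lam 𝓕
      ≤ ∑ C ∈ minCovers n 𝓕, ∑ _x ∈ A with _x ∈ C, lam ^ (-(C.card : ℤ)) := by
        refine sum_le_sum fun C hC => ?_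
        obtain ⟨y, hy⟩ := (mem_minCovers_s2.1 hC).2.1 A hA
        rw [mem_inter] at hy
        exact single_le_sum (fun _ _ => zpow_nonneg hlam _) (mem_filter.2 ⟨hy.2, hy.1⟩)
    _ = ∑ x ∈ A, ∑ C ∈ minCovers n 𝓕 with x ∈ C, lam ^ (-(C.card : ℤ)) :=
        sum_comm' fun _ _ => by simp only [mem_filter]; tauto

lemma sum_minCovers_mem_le (hlam : 0 ≤ lam) (𝓕 : Finset (Finset α)) (x : α) :
    ∑ C ∈ minCovers n 𝓕 with x ∈ C, lam ^ (-(C.card : ℤ)) ≤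
      lam⁻¹ * covWeight n lam {B ∈ 𝓕 | x ∉ B} := by
  have hinj : Set.InjOn (fun C : Finset α => C.erase x) ↑{C ∈ minCovers n 𝓕 | x ∈ C} :=
    fun C₁ h₁ C₂ h₂ h => by
      rw [← insert_erase (mem_filter.1 h₁).2, ← insert_erase (mem_filter.1 h₂).2]
      exact congrArg (insert x) h
  calc ∑ C ∈ minCovers n 𝓕 with x ∈ C, lam ^ (-(C.card : ℤ))
      = ∑ C ∈ minCovers n 𝓕 with x ∈ C, lam⁻¹ * lam ^ (-((C.erase x).card : ℤ)) :=
        sum_congr rfl fun C hC => zpow_neg_card_eq_inv_mul_erase (mem_filter.1 hC).2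
    _ = ∑ D ∈ {C ∈ minCovers n 𝓕 | x ∈ C}.image (·.erase x), lam⁻¹ * lam ^ (-(D.card : ℤ)) :=
        (sum_image (f := fun D => lam⁻¹ * lam ^ (-(D.card : ℤ))) hinj).symm
    _ ≤ ∑ D ∈ minCovers n {B ∈ 𝓕 | x ∉ B}, lam⁻¹ * lam ^ (-(D.card : ℤ)) := by
        refine sum_le_sum_of_subset_of_nonneg ?_ fun _ _ _ => by positivity
        rintro _ hD
        obtain ⟨C, hC, rfl⟩ := mem_image.1 hD
        exact erase_mem_minCovers_filter_notMem (mem_filter.1 hC).1 (mem_filter.1 hC).2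
    _ = lam⁻¹ * covWeight n lam {B ∈ 𝓕 | x ∉ B} := (mul_sum _ _ _).symm

theorem covWeight_le_one (hlam : 0 ≤ lam) (𝓕 : Finset (Finset α))
    (hcard : ∀ A ∈ 𝓕, (A.card : ℝ) ≤ lam) : covWeight n lam 𝓕 ≤ 1 := by
  induction 𝓕 using strongInduction with
  | _ 𝓕 ih =>
  obtain rfl | ⟨A, hA⟩ := 𝓕.eq_empty_or_nonempty
  · simp [covWeight, minCovers_empty]
  have hlink : ∀ x ∈ A, covWeight n lam {B ∈ 𝓕 | x ∉ B} ≤ 1 := fun x hx =>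
    ih _ (filter_ssubset.2 ⟨A, hA, not_not.2 hx⟩) fun B hB => hcard B (mem_filter.1 hB).1
  calc covWeight n lam 𝓕
      ≤ ∑ x ∈ A, ∑ C ∈ minCovers n 𝓕 with x ∈ C, lam ^ (-(C.card : ℤ)) :=
        covWeight_le_sum_sum_mem hlam hA
    _ ≤ ∑ x ∈ A, lam⁻¹ * covWeight n lam {B ∈ 𝓕 | x ∉ B} :=
        sum_le_sum fun x _ => sum_minCovers_mem_le hlam 𝓕 x
    _ ≤ ∑ _x ∈ A, lam⁻¹ := sum_le_sum fun x hx =>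
        mul_le_of_le_one_right (inv_nonneg.2 hlam) (hlink x hx)
    _ = A.card / lam := by rw [sum_const, nsmul_eq_mul, div_eq_mul_inv]
    _ ≤ 1 := div_le_one_of_le₀ (hcard A hA) hlam

end covWeight

theorem stmt2_general [Fintype α] [DecidableEq α] (n : ℕ) (𝓕 : Finset (Finset α))
    (hcard : ∀ A ∈ 𝓕, A.card ≤ n) :
    covWeight n (n : ℝ) 𝓕 ≤ 1 :=
  covWeight_le_one n.cast_nonneg 𝓕 fun A hA => by exact_mod_cast hcard A hA

theorem stmt2 [Fintype α] [DecidableEq α] (n : ℕ) (hn : 1 ≤ n) (𝓕 : Finset (Finset α))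
    (hne : ∀ A ∈ 𝓕, A.Nonempty) (hcard : ∀ A ∈ 𝓕, A.card ≤ n) :
    covWeight n (n : ℝ) 𝓕 ≤ 1 :=
  stmt2_general n 𝓕 hcard
end

section
/- Let $R$ be a finite set, $\lambda\ge|R|$ a real number, $t\ge 0$ an integer, and $\mathcal{C}\subseteq 2^R$ an antichain (no member contains another) in which every set has size at least $t$. Then $\sum_{C\in\mathcal{C}}\lambda^{-|C|}\le\lambda^{-t}\binom{|R|}{t}$. -/
open Finset

variable {α : Type*}

/-! With `n = |R|`, write `λ^{-|C|} = (λ^{-|C|} \binom{n}{|C|}) \binom{n}{|C|}^{-1}`. Since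
`\binom{n}{s} ≤ \binom{n}{t} n^{s-t}` and `λ ≥ n`, the first factor is at most `λ^{-t} \binom{n}{t}`
for `s ≥ t`, and the remaining sum `∑ \binom{n}{|C|}^{-1}` is at most `1` by the LYM inequality. -/

theorem Nat.choose_le_choose_mul_pow {n s t : ℕ} (hts : t ≤ s) :
    n.choose s ≤ n.choose t * n ^ (s - t) :=
  calc n.choose s ≤ n.choose s * s.choose t := Nat.le_mul_of_pos_right _ (Nat.choose_pos hts)
    _ = n.choose t * (n - t).choose (s - t) := Nat.choose_mul hts
    _ ≤ n.choose t * n ^ (s - t) :=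
      Nat.mul_le_mul_left _ ((Nat.choose_le_pow _ _).trans (Nat.pow_le_pow_left (Nat.sub_le _ _) _))

theorem zpow_neg_mul_choose_le_zpow_neg_mul_choose {n s t : ℕ} {lam : ℝ} (hlam : (n : ℝ) ≤ lam)
    (hts : t ≤ s) (hsn : s ≤ n) :
    lam ^ (-(s : ℤ)) * n.choose s ≤ lam ^ (-(t : ℤ)) * n.choose t := by
  rcases hts.eq_or_lt with rfl | hts'
  · rfl
  have hlam_pos : 0 < lam := lt_of_lt_of_le (Nat.cast_pos.2 (by omega)) hlam
  have hchoose : (n.choose s : ℝ) ≤ n.choose t * lam ^ (s - t) :=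
    calc (n.choose s : ℝ) ≤ n.choose t * (n : ℝ) ^ (s - t) := by
          exact_mod_cast Nat.choose_le_choose_mul_pow hts
      _ ≤ n.choose t * lam ^ (s - t) := by gcongr
  calc lam ^ (-(s : ℤ)) * n.choose s ≤ lam ^ (-(s : ℤ)) * (n.choose t * lam ^ (s - t)) :=
        mul_le_mul_of_nonneg_left hchoose (by positivity)
    _ = lam ^ (-(t : ℤ)) * n.choose t := by
        rw [← zpow_natCast, Nat.cast_sub hts, mul_left_comm, ← zpow_add₀ hlam_pos.ne']
        ring_nf

theorem Finset.sum_inv_choose_card_le_one {𝕜 : Type*} [Semifield 𝕜] [LinearOrder 𝕜]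
    [IsStrictOrderedRing 𝕜] [DecidableEq α] {R : Finset α} {𝓒 : Finset (Finset α)}
    (hsub : ∀ C ∈ 𝓒, C ⊆ R) (hanti : IsAntichain (· ⊆ ·) (𝓒 : Set (Finset α))) :
    ∑ C ∈ 𝓒, ((#R).choose #C : 𝕜)⁻¹ ≤ 1 := by
  let ι : Finset R ↪o Finset α := mapEmbedding (Function.Embedding.subtype (· ∈ R))
  let 𝓓 : Finset (Finset R) := 𝓒.image (Finset.subtype (· ∈ R))
  have h𝓓 : 𝓓.map ι.toEmbedding = 𝓒 := by
    rw [map_eq_image, image_image]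
    convert image_id (s := 𝓒) using 1
    exact image_congr fun C hC => subtype_map_of_mem fun x hx => hsub C hC hx
  have hanti𝓓 : IsAntichain (· ⊆ ·) (𝓓 : Set (Finset R)) := by
    rw [← h𝓓, coe_map] at hanti
    exact IsAntichain.image_embedding_iff (φ := ι) |>.1 hanti
  calc ∑ C ∈ 𝓒, ((#R).choose #C : 𝕜)⁻¹ = ∑ D ∈ 𝓓, ((#R).choose #D : 𝕜)⁻¹ := by
        rw [← h𝓓, sum_map]
        simp [ι]
    _ ≤ 1 := by
        simpa using lubell_yamamoto_meshalkin_inequality_sum_inv_choose (𝕜 := 𝕜) hanti𝓓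

theorem stmt4 [DecidableEq α] (R : Finset α) (lam : ℝ) (hlam : (R.card : ℝ) ≤ lam)
    (t : ℕ) (𝓒 : Finset (Finset α)) (hsub : ∀ C ∈ 𝓒, C ⊆ R)
    (hanti : ∀ C ∈ 𝓒, ∀ C' ∈ 𝓒, C ⊆ C' → C = C')
    (hsize : ∀ C ∈ 𝓒, t ≤ C.card) :
    ∑ C ∈ 𝓒, lam ^ (-(C.card : ℤ)) ≤ lam ^ (-(t : ℤ)) * (R.card.choose t) := by
  have hchoose_ne : ∀ C ∈ 𝓒, ((#R).choose #C : ℝ) ≠ 0 := fun C hC =>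
    Nat.cast_ne_zero.2 (Nat.choose_pos (card_le_card (hsub C hC))).ne'
  have hbound_nonneg : 0 ≤ lam ^ (-(t : ℤ)) * (#R).choose t :=
    mul_nonneg (zpow_nonneg ((Nat.cast_nonneg _).trans hlam) _) (Nat.cast_nonneg _)
  have hLYM : ∑ C ∈ 𝓒, ((#R).choose #C : ℝ)⁻¹ ≤ 1 :=
    sum_inv_choose_card_le_one hsub fun C hC C' hC' hne hCC' => hne (hanti C hC C' hC' hCC')
  calc ∑ C ∈ 𝓒, lam ^ (-(#C : ℤ))
      = ∑ C ∈ 𝓒, lam ^ (-(#C : ℤ)) * (#R).choose #C * ((#R).choose #C : ℝ)⁻¹ :=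
        sum_congr rfl fun C hC => (mul_inv_cancel_right₀ (hchoose_ne C hC) _).symm
    _ ≤ ∑ C ∈ 𝓒, lam ^ (-(t : ℤ)) * (#R).choose t * ((#R).choose #C : ℝ)⁻¹ :=
        sum_le_sum fun C hC => mul_le_mul_of_nonneg_right
          (zpow_neg_mul_choose_le_zpow_neg_mul_choose hlam (hsize C hC) (card_le_card (hsub C hC)))
          (by positivity)
    _ = lam ^ (-(t : ℤ)) * (#R).choose t * ∑ C ∈ 𝓒, ((#R).choose #C : ℝ)⁻¹ := (mul_sum ..).symm
    _ ≤ lam ^ (-(t : ℤ)) * (#R).choose t := mul_le_of_le_one_right hbound_nonneg hLYM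
end

section
/- Let $\mathcal{A}$ be a $\tau$-critical $n$-uniform family and $\mathcal{K}\subseteq\mathcal{A}$ a subfamily such that $|\bigcap_{F\in\mathcal{K}}F|\ge n-k$ for some integer $k\ge 0$. Then $|\mathcal{K}|\le\binom{\tau(\mathcal{A})+k}{k}$. -/
/-!
Fix a `τ`-critical family `𝓐` with `τ = τ(𝓐)`, and let `K` be the kernel of `𝓚`. By criticality,
every `F ∈ 𝓚` has a set `S F` of size `< τ` that covers all members of `𝓐` except `F`, and `S F`
then misses `F`. The pairs `(F \ K, S F)` form a Bollobás set-pair system: `S F` misses `F \ K`,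
while for `F ≠ G` the point of `S G ∩ F` lies outside `G ⊇ K`. Since `|F \ K| ≤ k` and
`|S F| ≤ τ - 1`, Bollobás's inequality gives `|𝓚| ≤ C(k + τ - 1, k) ≤ C(τ + k, k)`.

Bollobás's inequality is proved in its weighted form `∑ 1 / C(|Aᵢ| + |Bᵢ|, |Aᵢ|) ≤ 1` by induction
on the ground set `X`: deleting a point `x` and keeping the pairs with `x ∉ Aᵢ` (with `x` removed
from `Bᵢ`) gives a smaller system, and summing these inequalities over `x ∈ X` recovers `|X|`
times the weighted sum.
-/

open Finset

variable {α : Type*}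

lemma Nat.choose_add_le_choose_add {a b a' b' : ℕ} (ha : a ≤ a') (hb : b ≤ b') :
    (a + b).choose a ≤ (a' + b').choose a' :=
  calc (a + b).choose a = (a + b).choose b := Nat.choose_symm_add
    _ ≤ (a' + b).choose b := Nat.choose_le_choose _ (by omega)
    _ = (a' + b).choose a' := Nat.choose_symm_add.symm
    _ ≤ (a' + b').choose a' := Nat.choose_le_choose _ (by omega)

lemma add_one_mul_inv_choose (a b : ℕ) :
    ((b + 1 : ℕ) : ℚ) * ((a + b).choose a : ℚ)⁻¹
      = ((a + b + 1 : ℕ) : ℚ) * ((a + b + 1).choose a : ℚ)⁻¹ := by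
  have key := Nat.choose_mul_succ_eq (a + b) a
  rw [show a + b + 1 - a = b + 1 by omega] at key
  have h₁ : ((a + b).choose a : ℚ) ≠ 0 := by
    exact_mod_cast (Nat.choose_pos (by omega)).ne'
  have h₂ : ((a + b + 1).choose a : ℚ) ≠ 0 := by
    exact_mod_cast (Nat.choose_pos (by omega)).ne'
  field_simp
  exact_mod_cast (mul_comm _ _).trans key.symm

section SetPairSystems

variable {ι β : Type*}

def pairWeight (A B : Finset β) : ℚ := ((A.card + B.card).choose A.card : ℚ)⁻¹

lemma pairWeight_le_one (A B : Finset β) : pairWeight A B ≤ 1 :=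
  inv_le_one_of_one_le₀ (by exact_mod_cast Nat.choose_pos (Nat.le_add_right _ _))

lemma inv_choose_le_pairWeight {A B : Finset β} {a b : ℕ} (ha : A.card ≤ a) (hb : B.card ≤ b) :
    ((a + b).choose a : ℚ)⁻¹ ≤ pairWeight A B :=
  inv_anti₀ (by exact_mod_cast Nat.choose_pos (Nat.le_add_right _ _))
    (by exact_mod_cast Nat.choose_add_le_choose_add ha hb)

variable [DecidableEq β]

lemma sum_sdiff_pairWeight_erase {A B X : Finset β} (hAX : A ⊆ X) (hBX : B ⊆ X)
    (hAB : Disjoint A B) (hB : B.Nonempty) :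
    ∑ x ∈ X \ A, pairWeight A (B.erase x) = X.card * pairWeight A B := by
  obtain ⟨b, hb⟩ : ∃ b, B.card = b + 1 := ⟨B.card - 1, by have := hB.card_pos; omega⟩
  have hsplit : X \ A = B ∪ X \ (A ∪ B) := by
    ext y
    have := @disjoint_right.mp hAB y
    have := @hBX y
    simp only [mem_sdiff, mem_union]
    tauto
  have hdisj : Disjoint B (X \ (A ∪ B)) := disjoint_sdiff.mono_left subset_union_right
  have hcard : A.card + B.card + (X \ (A ∪ B)).card = X.card := by
    rw [card_sdiff_of_subset (union_subset hAX hBX), card_union_of_disjoint hAB]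
    have := card_le_card (union_subset hAX hBX)
    rw [card_union_of_disjoint hAB] at this
    omega
  have hin : ∑ x ∈ B, pairWeight A (B.erase x) = (A.card + B.card : ℕ) * pairWeight A B := by
    rw [sum_congr rfl fun x hx => by rw [pairWeight, card_erase_of_mem hx], sum_const,
      nsmul_eq_mul, pairWeight, hb, Nat.add_sub_cancel, ← add_assoc]
    exact_mod_cast add_one_mul_inv_choose _ _
  have hout : ∑ x ∈ X \ (A ∪ B), pairWeight A (B.erase x)
      = (X \ (A ∪ B)).card * pairWeight A B :=
    (sum_congr rfl fun x hx => by
      rw [erase_eq_of_notMem fun h => (mem_sdiff.mp hx).2 (mem_union_right _ h)]).trans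
      (by rw [sum_const, nsmul_eq_mul])
  rw [hsplit, sum_union hdisj, hin, hout, ← hcard]
  push_cast
  ring

def IsSetPairSystem (I : Finset ι) (A B : ι → Finset β) : Prop :=
  (∀ i ∈ I, Disjoint (A i) (B i)) ∧ ∀ i ∈ I, ∀ j ∈ I, i ≠ j → (A i ∩ B j).Nonempty

lemma IsSetPairSystem.filter_erase {I : Finset ι} {A B : ι → Finset β}
    (h : IsSetPairSystem I A B) (x : β) :
    IsSetPairSystem (I.filter (x ∉ A ·)) A (fun i => (B i).erase x) := by
  refine ⟨fun i hi => (h.1 i (mem_filter.mp hi).1).mono_right (erase_subset _ _),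
    fun i hi j hj hij => ?_⟩
  obtain ⟨y, hy⟩ := h.2 i (mem_filter.mp hi).1 j (mem_filter.mp hj).1 hij
  rw [mem_inter] at hy
  exact ⟨y, mem_inter.mpr ⟨hy.1, mem_erase.mpr ⟨fun hxy => (mem_filter.mp hi).2 (hxy ▸ hy.1), hy.2⟩⟩⟩

theorem IsSetPairSystem.sum_pairWeight_le_one {I : Finset ι} {A B : ι → Finset β} {X : Finset β}
    (h : IsSetPairSystem I A B) (hAX : ∀ i ∈ I, A i ⊆ X) (hBX : ∀ i ∈ I, B i ⊆ X) :
    ∑ i ∈ I, pairWeight (A i) (B i) ≤ 1 := by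
  induction X using Finset.strongInduction generalizing I B with
  | H X ih =>
  by_cases hB : ∀ i ∈ I, (B i).Nonempty
  swap
  · -- an empty `B i` meets no `A j`, so `i` is the only index
    obtain ⟨i, hi, hBi⟩ : ∃ i ∈ I, B i = ∅ := by
      simpa [not_nonempty_iff_eq_empty] using hB
    have hI : I = {i} := eq_singleton_iff_unique_mem.mpr ⟨hi, fun j hj => by
      by_contra hji
      simpa [hBi] using h.2 j hj i hi hji⟩
    rw [hI, sum_singleton]
    exact pairWeight_le_one _ _
  rcases I.eq_empty_or_nonempty with rfl | ⟨i₀, hi₀⟩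
  · simp
  have hX : (0 : ℚ) < X.card := by
    exact_mod_cast card_pos.mpr ((hB i₀ hi₀).mono (hBX i₀ hi₀))
  have hx : ∀ x ∈ X, ∑ i ∈ I.filter (x ∉ A ·), pairWeight (A i) ((B i).erase x) ≤ 1 :=
    fun x hx => ih (X.erase x) (erase_ssubset hx) (h.filter_erase x)
      (fun i hi => subset_erase.mpr ⟨hAX i (mem_filter.mp hi).1, (mem_filter.mp hi).2⟩)
      (fun i hi => erase_subset_erase x (hBX i (mem_filter.mp hi).1))
  refine le_of_mul_le_mul_left ?_ hX
  calc (X.card : ℚ) * ∑ i ∈ I, pairWeight (A i) (B i)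
      = ∑ i ∈ I, ∑ x ∈ X \ A i, pairWeight (A i) ((B i).erase x) := by
        rw [mul_sum]
        exact sum_congr rfl fun i hi => (sum_sdiff_pairWeight_erase (hAX i hi) (hBX i hi)
          (h.1 i hi) (hB i hi)).symm
    _ = ∑ x ∈ X, ∑ i ∈ I.filter (x ∉ A ·), pairWeight (A i) ((B i).erase x) :=
        sum_comm' fun i x => by simp only [mem_sdiff, mem_filter]; tauto
    _ ≤ ∑ _x ∈ X, 1 := sum_le_sum hx
    _ = X.card * 1 := by simp

theorem IsSetPairSystem.card_le_choose {I : Finset ι} {A B : ι → Finset β} {a b : ℕ}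
    (h : IsSetPairSystem I A B) (ha : ∀ i ∈ I, (A i).card ≤ a) (hb : ∀ i ∈ I, (B i).card ≤ b) :
    I.card ≤ (a + b).choose a := by
  have hpos : (0 : ℚ) < (a + b).choose a := by exact_mod_cast Nat.choose_pos (Nat.le_add_right _ _)
  have hweight : I.card * ((a + b).choose a : ℚ)⁻¹ ≤ 1 :=
    calc I.card * ((a + b).choose a : ℚ)⁻¹ = ∑ _i ∈ I, ((a + b).choose a : ℚ)⁻¹ := by simp
      _ ≤ ∑ i ∈ I, pairWeight (A i) (B i) :=
          sum_le_sum fun i hi => inv_choose_le_pairWeight (ha i hi) (hb i hi)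
      _ ≤ 1 := h.sum_pairWeight_le_one (X := I.biUnion fun i => A i ∪ B i)
          (fun i hi => subset_union_left.trans (subset_biUnion_of_mem (fun i => A i ∪ B i) hi))
          (fun i hi => subset_union_right.trans (subset_biUnion_of_mem (fun i => A i ∪ B i) hi))
  exact_mod_cast ((mul_inv_le_iff₀ hpos).mp hweight).trans_eq (one_mul _)

end SetPairSystems

section Covers

variable [DecidableEq α] {𝓕 : Finset (Finset α)}

lemma covNum_le_card {C : Finset α} (h : IsCover C 𝓕) : covNum 𝓕 ≤ C.card :=
  Nat.sInf_le ⟨C, rfl, h⟩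

lemma covNum_eq_zero_of_empty_mem (h : ∅ ∈ 𝓕) : covNum 𝓕 = 0 := by
  have : {k | ∃ C : Finset α, C.card = k ∧ IsCover C 𝓕} = ∅ :=
    Set.eq_empty_of_forall_notMem fun _ ⟨_, _, hC⟩ => by simpa using hC ∅ h
  rw [covNum, this, Nat.sInf_empty]

lemma exists_isCover_card_eq_covNum (h : ∅ ∉ 𝓕) : ∃ C, IsCover C 𝓕 ∧ C.card = covNum 𝓕 := by
  have hcov : IsCover (𝓕.sup id) 𝓕 := fun A hA => by
    have hA' : A ⊆ 𝓕.sup id := le_sup (f := id) hA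
    rw [inter_eq_right.mpr hA']
    exact nonempty_iff_ne_empty.mpr (ne_of_mem_of_not_mem hA h)
  obtain ⟨C, hC, hCcov⟩ :=
    Nat.sInf_mem (s := {k | ∃ C : Finset α, C.card = k ∧ IsCover C 𝓕}) ⟨_, _, rfl, hcov⟩
  exact ⟨C, hCcov, hC⟩

lemma exists_disjoint_isCover_erase {F : Finset α} (hlt : covNum (𝓕.erase F) < covNum 𝓕) :
    ∃ S, S.card < covNum 𝓕 ∧ IsCover S (𝓕.erase F) ∧ Disjoint S F := by
  have hempty : ∅ ∉ 𝓕.erase F := fun h =>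
    Nat.not_lt_zero _ (covNum_eq_zero_of_empty_mem (mem_of_mem_erase h) ▸ hlt)
  obtain ⟨S, hS, hcard⟩ := exists_isCover_card_eq_covNum hempty
  refine ⟨S, hcard ▸ hlt, hS, ?_⟩
  by_contra hSF
  have hSF' : IsCover S 𝓕 := fun A hA => by
    by_cases hAF : A = F
    · exact hAF ▸ not_disjoint_iff_nonempty_inter.mp hSF
    · exact hS A (mem_erase.mpr ⟨hAF, hA⟩)
  exact (covNum_le_card hSF').not_gt (hcard ▸ hlt)

end Covers

theorem stmt6 [Fintype α] [DecidableEq α] (n k : ℕ) (𝓐 : Finset (Finset α))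
    (hunif : ∀ A ∈ 𝓐, A.card = n)
    (hcrit : ∀ 𝓐' ⊆ 𝓐, 𝓐' ≠ 𝓐 → covNum 𝓐' < covNum 𝓐)
    (𝓚 : Finset (Finset α)) (hsub : 𝓚 ⊆ 𝓐)
    (hker : n - k ≤ (univ.filter (fun x => ∀ F ∈ 𝓚, x ∈ F)).card) :
    𝓚.card ≤ (covNum 𝓐 + k).choose k := by
  choose! S hS_card hS_cover hS_disj using fun F (hF : F ∈ 𝓚) =>
    exists_disjoint_isCover_erase (hcrit _ (erase_subset F 𝓐) (erase_ne_self.mpr (hsub hF)))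
  set K := univ.filter fun x => ∀ F ∈ 𝓚, x ∈ F
  have hKF : ∀ F ∈ 𝓚, K ⊆ F := fun F hF x hx => (mem_filter.mp hx).2 F hF
  have hsys : IsSetPairSystem 𝓚 (· \ K) S := by
    refine ⟨fun F hF => (hS_disj F hF).symm.mono_left sdiff_subset, fun F hF G hG hFG => ?_⟩
    obtain ⟨x, hx⟩ := hS_cover G hG F (mem_erase.mpr ⟨hFG, hsub hF⟩)
    obtain ⟨hxS, hxF⟩ := mem_inter.mp hx
    have hxK : x ∉ K := fun hxK => disjoint_left.mp (hS_disj G hG) hxS (hKF G hG hxK)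
    exact ⟨x, mem_inter.mpr ⟨mem_sdiff.mpr ⟨hxF, hxK⟩, hxS⟩⟩
  have hA : ∀ F ∈ 𝓚, (F \ K).card ≤ k := fun F hF => by
    rw [card_sdiff_of_subset (hKF F hF), hunif F (hsub hF)]
    omega
  have hB : ∀ F ∈ 𝓚, (S F).card ≤ covNum 𝓐 - 1 := fun F hF => by
    have := hS_card F hF
    omega
  calc 𝓚.card ≤ (k + (covNum 𝓐 - 1)).choose k := hsys.card_le_choose hA hB
    _ ≤ (covNum 𝓐 + k).choose k := Nat.choose_le_choose _ (by omega)
end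

section
/- Let $X$ be a finite set, $f:X\to\mathbb{R}_{\ge 0}$ a nonzero function, and $\mathcal{F}$ a nonempty finite family of subsets of $X$ with covering number $\tau(\mathcal{F})\ge 1$. Then $\sum_{F\in\mathcal{F}}\left(1-\frac{f(F)}{f(X)}\right)^{\tau(\mathcal{F})-1}\ge 1$, where $f(S)=\sum_{x\in S}f(x)$. -/
/-!
Sample `τ(𝓕) - 1` points independently from the distribution `p = f / f(X)`. Fewer than `τ(𝓕)`
points never cover `𝓕`, so at least one member of `𝓕` is always missed, and the expected number
of missed members, `∑_F (1 - p(F))^(τ(𝓕) - 1)`, is at least `1`.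
-/

open Finset

variable {α : Type*}

lemma covNum_le_card_of_isCover [DecidableEq α] {𝓕 : Finset (Finset α)} {C : Finset α}
    (hC : IsCover C 𝓕) : covNum 𝓕 ≤ C.card :=
  Nat.sInf_le ⟨C, rfl, hC⟩

lemma exists_forall_notMem_of_lt_covNum [DecidableEq α] {𝓕 : Finset (Finset α)} {t : ℕ}
    (ht : t < covNum 𝓕) (w : Fin t → α) : ∃ F ∈ 𝓕, ∀ i, w i ∉ F := by
  by_contra! hcover
  have hC : IsCover (univ.image w) 𝓕 := fun F hF => by
    obtain ⟨i, hi⟩ := hcover F hF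
    exact ⟨w i, mem_inter.2 ⟨mem_image_of_mem w (mem_univ i), hi⟩⟩
  have hcard : (univ.image w).card ≤ t := card_image_le.trans_eq (card_fin t)
  exact (covNum_le_card_of_isCover hC).not_gt (hcard.trans_lt ht)

lemma one_le_sum_sum_compl_pow [Fintype α] [DecidableEq α] {p : α → ℝ} (hp0 : ∀ x, 0 ≤ p x)
    (hp1 : ∑ x, p x = 1) {𝓕 : Finset (Finset α)} {t : ℕ} (ht : t < covNum 𝓕) :
    1 ≤ ∑ F ∈ 𝓕, (∑ x ∈ Fᶜ, p x) ^ t := by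
  have hmissed (w : Fin t → α) : 1 ≤ #{F ∈ 𝓕 | ∀ i, w i ∉ F} := by
    obtain ⟨F, hF, hw⟩ := exists_forall_notMem_of_lt_covNum ht w
    exact one_le_card.2 ⟨F, mem_filter.2 ⟨hF, hw⟩⟩
  calc (1 : ℝ) = (∑ x, p x) ^ t := by rw [hp1, one_pow]
    _ = ∑ w : Fin t → α, ∏ i, p (w i) := Fintype.sum_pow p t
    _ ≤ ∑ w : Fin t → α, ∑ F ∈ 𝓕 with ∀ i, w i ∉ F, ∏ i, p (w i) := by
        refine sum_le_sum fun w _ => ?_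
        rw [sum_const, nsmul_eq_mul]
        exact le_mul_of_one_le_left (prod_nonneg fun i _ => hp0 (w i))
          (by exact_mod_cast hmissed w)
    _ = ∑ F ∈ 𝓕, ∑ w ∈ Fintype.piFinset fun _ => Fᶜ, ∏ i, p (w i) :=
        sum_comm' fun w F => by simp [Fintype.mem_piFinset, and_comm]
    _ = ∑ F ∈ 𝓕, (∑ x ∈ Fᶜ, p x) ^ t := by simp_rw [sum_pow']

theorem stmt7_general [Fintype α] [DecidableEq α] (f : α → ℝ) (hf0 : ∀ x, 0 ≤ f x) (hfne : f ≠ 0)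
    (𝓕 : Finset (Finset α)) (htau : 1 ≤ covNum 𝓕) :
    1 ≤ ∑ F ∈ 𝓕, (1 - (∑ x ∈ F, f x) / (∑ x, f x)) ^ (covNum 𝓕 - 1) := by
  have hS : 0 < ∑ x, f x := Fintype.sum_pos (lt_of_le_of_ne hf0 hfne.symm)
  have hp1 : ∑ x, f x / ∑ y, f y = 1 := by rw [← sum_div, div_self hS.ne']
  have key := one_le_sum_sum_compl_pow (fun x => div_nonneg (hf0 x) hS.le) hp1
    (Nat.sub_lt htau one_pos) (𝓕 := 𝓕)
  convert key using 3 with F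
  rw [← sum_div, eq_div_iff hS.ne', sub_mul, one_mul, div_mul_cancel₀ _ hS.ne',
    ← sum_compl_add_sum F, add_sub_cancel_right]

theorem stmt7 [Fintype α] [DecidableEq α] (f : α → ℝ) (hf0 : ∀ x, 0 ≤ f x) (hfne : f ≠ 0)
    (𝓕 : Finset (Finset α)) (hne : 𝓕.Nonempty) (htau : 1 ≤ covNum 𝓕) :
    1 ≤ ∑ F ∈ 𝓕, (1 - (∑ x ∈ F, f x) / (∑ x, f x)) ^ (covNum 𝓕 - 1) :=
  stmt7_general f hf0 hfne 𝓕 htau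
end

section
/- Let $n\ge 1$, $l\ge 1$, and $r\ge 2l$ with $r^2\le l^3 n$. Let $\mathcal{B}$ be an $n$-uniform intersecting family of size $r$ such that the intersection of any $l$ distinct members of $\mathcal{B}$ is empty. Then $c_n(\mathcal{B})\le e^{-r^2/(10\,l^3 n)}$, where $c_n(\mathcal{B})=\sum_{C\in\mathcal{C}(\mathcal{B})}n^{-|C|}$ and $\mathcal{C}(\mathcal{B})$ is the family of minimal covers of $\mathcal{B}$ of size at most $n$. -/
open Finset

variable {α : Type*}

/-!
Write `Σ(𝓖)` for the sum of `n^{-|C|}` over all minimal covers `C` of `𝓖`. A minimal cover meets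
every `B ∈ 𝓖`, and erasing a point `x ∈ C ∩ B` injectively leaves a minimal cover of the members
avoiding `x`; branching on `B` gives `Σ(𝓖) ≤ n⁻¹ ∑_{x ∈ B} Σ(𝓖_x)`, hence `Σ(𝓖) ≤ 1` for
`n`-uniform families.

For the decay, halve the weight of the covers meeting the union `U` of the sets branched on so far.
As every point lies in at most `l - 1` members, the `t`-th branching set meets `U` in at least
`t / (l - 2)` points, so at most a fraction `e^{-t / ((l - 2) n)}` of its branches avoid `U`.
Each branching discards at most `l - 1` members, so there are `m ≥ r / (l - 1)` of them, and the
weighted sum is at most `(1 + e^{-m (m - 1) / (2 (l - 2) n)}) / 2 ≤ (1 + e^{-r² / (4 l³ n)}) / 2`,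
which is at most `e^{-r² / (10 l³ n)}` because `r² ≤ l³ n`.
-/

lemma natCast_le_exp_mul {t d M K : ℕ} (h : t ≤ d * M) :
    (K : ℝ) ≤ Real.exp (-(t : ℝ) / (d * (M + K) : ℕ)) * (M + K : ℕ) := by
  set x : ℝ := (t : ℝ) / (d * (M + K) : ℕ)
  have hx : x * (M + K : ℕ) ≤ M := by
    rcases eq_or_ne d 0 with rfl | hd
    · simp [x]
    rcases Nat.eq_zero_or_pos (M + K) with hMK | hMK
    · simp [hMK]
    rw [div_mul_eq_mul_div, div_le_iff₀ (by positivity)]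
    push_cast
    have : (t : ℝ) ≤ d * M := by exact_mod_cast h
    nlinarith
  calc (K : ℝ) ≤ (1 - x) * (M + K : ℕ) := by push_cast at hx ⊢; linarith
    _ ≤ Real.exp (-x) * (M + K : ℕ) := by
        gcongr
        linarith [Real.add_one_le_exp (-x)]
    _ = _ := by rw [neg_div]

section Families

variable [DecidableEq α]

lemma filter_notMem_ssubset {𝓖 : Finset (Finset α)} {B : Finset α} (hB : B ∈ 𝓖)
    {x : α} (hx : x ∈ B) : 𝓖.filter (x ∉ ·) ⊂ 𝓖 :=
  (ssubset_iff_of_subset (filter_subset _ 𝓖)).mpr ⟨B, hB, fun h => (mem_filter.mp h).2 hx⟩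

lemma card_le_card_filter_notMem_add {𝓖 : Finset (Finset α)} {k : ℕ}
    (hdeg : ∀ x, #(𝓖.filter (x ∈ ·)) ≤ k) (x : α) : #𝓖 ≤ #(𝓖.filter (x ∉ ·)) + k := by
  have := card_filter_add_card_filter_not (s := 𝓖) (p := (x ∈ ·))
  have := hdeg x
  omega

lemma card_filter_mem_lt {𝓑 : Finset (Finset α)} {l : ℕ}
    (hdeg : ∀ 𝓢 ⊆ 𝓑, #𝓢 = l → ∀ x : α, ¬ ∀ B ∈ 𝓢, x ∈ B) (x : α) :
    #(𝓑.filter (x ∈ ·)) < l := by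
  by_contra! h
  obtain ⟨𝓢, h𝓢, hcard⟩ := exists_subset_card_eq h
  exact hdeg 𝓢 (h𝓢.trans (filter_subset _ 𝓑)) hcard x fun B hB => (mem_filter.mp (h𝓢 hB)).2

lemma three_le_of_intersecting {𝓑 : Finset (Finset α)} {l : ℕ} (hl : 1 ≤ l)
    (h𝓑 : 2 ≤ #𝓑) (hint : ∀ B1 ∈ 𝓑, ∀ B2 ∈ 𝓑, (B1 ∩ B2).Nonempty)
    (hdeg : ∀ 𝓢 ⊆ 𝓑, #𝓢 = l → ∀ x : α, ¬ ∀ B ∈ 𝓢, x ∈ B) : 3 ≤ l := by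
  by_contra! hl3
  obtain ⟨B₁, hB₁, B₂, hB₂, hne⟩ := one_lt_card.mp h𝓑
  obtain ⟨x, hx⟩ := hint B₁ hB₁ B₂ hB₂
  obtain ⟨𝓢, h𝓢, hcard⟩ := exists_subset_card_eq (s := {B₁, B₂}) (n := l)
    (by rw [card_pair hne]; omega)
  refine hdeg 𝓢 (h𝓢.trans (insert_subset hB₁ (singleton_subset_iff.mpr hB₂))) hcard x
    fun B hB => ?_
  rcases mem_insert.mp (h𝓢 hB) with rfl | hB
  · exact (mem_inter.mp hx).1
  · exact mem_singleton.mp hB ▸ (mem_inter.mp hx).2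

lemma card_le_mul_card_inter_biUnion {𝓣 : Finset (Finset α)} {B : Finset α}
    {d : ℕ} (hmeet : ∀ T ∈ 𝓣, (B ∩ T).Nonempty) (hdeg : ∀ x ∈ B, #(𝓣.filter (x ∈ ·)) ≤ d) :
    #𝓣 ≤ d * #(B ∩ 𝓣.biUnion id) := by
  have key := card_mul_le_card_mul (fun (T : Finset α) x => x ∈ T) (m := 1) (n := d)
    (s := 𝓣) (t := B ∩ 𝓣.biUnion id)
    (fun T hT => by
      obtain ⟨x, hx⟩ := hmeet T hT
      obtain ⟨hxB, hxT⟩ := mem_inter.mp hx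
      exact card_pos.mpr ⟨x, mem_filter.mpr
        ⟨mem_inter.mpr ⟨hxB, mem_biUnion.mpr ⟨T, hT, hxT⟩⟩, hxT⟩⟩)
    (fun x hx => hdeg x (mem_inter.mp hx).1)
  rw [mul_one] at key
  exact key.trans_eq (mul_comm _ _)

lemma card_filter_notMem_biUnion_le {𝓑 𝓣 : Finset (Finset α)} {B : Finset α}
    {k : ℕ} (hmeet : ∀ T ∈ 𝓣, (B ∩ T).Nonempty) (hdeg : ∀ x, #(𝓑.filter (x ∈ ·)) ≤ k)
    (h𝓣 : 𝓣 ⊆ 𝓑) (hB : B ∈ 𝓑) (hB𝓣 : B ∉ 𝓣) :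
    (#(B.filter (· ∉ 𝓣.biUnion id)) : ℝ)
      ≤ Real.exp (-(#𝓣 : ℝ) / ((k - 1) * #B : ℕ)) * #B := by
  have hdegB : ∀ x ∈ B, #(𝓣.filter (x ∈ ·)) ≤ k - 1 := fun x hx => by
    have hsub : 𝓣.filter (x ∈ ·) ⊆ (𝓑.filter (x ∈ ·)).erase B := fun T hT => by
      obtain ⟨hT𝓣, hxT⟩ := mem_filter.mp hT
      exact mem_erase.mpr ⟨fun h => hB𝓣 (h ▸ hT𝓣), mem_filter.mpr ⟨h𝓣 hT𝓣, hxT⟩⟩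
    have := card_le_card hsub
    rw [card_erase_of_mem (mem_filter.mpr ⟨hB, hx⟩)] at this
    exact this.trans (Nat.sub_le_sub_right (hdeg x) 1)
  have ht := card_le_mul_card_inter_biUnion hmeet hdegB
  rw [← filter_mem_eq_inter] at ht
  have := natCast_le_exp_mul (K := #(B.filter (· ∉ 𝓣.biUnion id))) ht
  rwa [card_filter_add_card_filter_not] at this

end Families

section MinimalCovers

variable [Fintype α] [DecidableEq α]

noncomputable def minimalCovers (𝓖 : Finset (Finset α)) : Finset (Finset α) := by
  classical
  exact univ.filter (fun C => IsCover C 𝓖 ∧ ∀ C' ⊆ C, IsCover C' 𝓖 → C' = C)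

lemma mem_minimalCovers {𝓖 : Finset (Finset α)} {C : Finset α} :
    C ∈ minimalCovers 𝓖 ↔ IsCover C 𝓖 ∧ ∀ C' ⊆ C, IsCover C' 𝓖 → C' = C := by
  simp [minimalCovers]

lemma minCovers_subset_minimalCovers (n : ℕ) (𝓖 : Finset (Finset α)) :
    minCovers n 𝓖 ⊆ minimalCovers 𝓖 := by
  intro C hC
  simp only [minCovers, mem_filter, mem_univ, true_and] at hC
  exact mem_minimalCovers.mpr hC.2

lemma minimalCovers_empty : minimalCovers (∅ : Finset (Finset α)) = {∅} := by
  have hcov : ∀ C : Finset α, IsCover C ∅ := fun _ A hA => absurd hA (notMem_empty A)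
  ext C
  simp only [mem_minimalCovers, mem_singleton]
  exact ⟨fun h => (h.2 ∅ (empty_subset C) (hcov ∅)).symm,
    fun h => ⟨hcov C, fun C' hC' _ => h ▸ subset_empty.mp (h ▸ hC')⟩⟩

lemma erase_mem_minimalCovers {𝓖 : Finset (Finset α)} {C : Finset α} {x : α}
    (hC : C ∈ minimalCovers 𝓖) (hx : x ∈ C) :
    C.erase x ∈ minimalCovers (𝓖.filter (x ∉ ·)) := by
  obtain ⟨hcov, hmin⟩ := mem_minimalCovers.mp hC
  refine mem_minimalCovers.mpr ⟨fun A hA => ?_, fun D hD hDcov => ?_⟩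
  · obtain ⟨hA𝓖, hxA⟩ := mem_filter.mp hA
    obtain ⟨y, hy⟩ := hcov A hA𝓖
    obtain ⟨hyC, hyA⟩ := mem_inter.mp hy
    exact ⟨y, mem_inter.mpr ⟨mem_erase.mpr ⟨fun h => hxA (h ▸ hyA), hyC⟩, hyA⟩⟩
  · have hcov' : IsCover (insert x D) 𝓖 := by
      intro A hA
      by_cases hxA : x ∈ A
      · exact ⟨x, mem_inter.mpr ⟨mem_insert_self x D, hxA⟩⟩
      · obtain ⟨y, hy⟩ := hDcov A (mem_filter.mpr ⟨hA, hxA⟩)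
        exact ⟨y, inter_subset_inter_right (subset_insert x D) hy⟩
    have hxD : x ∉ D := fun h => (mem_erase.mp (hD h)).1 rfl
    rw [← hmin (insert x D) (insert_subset hx (hD.trans (erase_subset x C))) hcov',
      erase_insert hxD]

end MinimalCovers

section CoverSum

variable [Fintype α] [DecidableEq α]

noncomputable def coverSum (p : ℝ) (w : Finset α → ℝ) (𝓖 : Finset (Finset α)) : ℝ :=
  ∑ C ∈ minimalCovers 𝓖, p ^ C.card * w C

lemma coverSum_empty (p : ℝ) (w : Finset α → ℝ) : coverSum p w ∅ = w ∅ := by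
  simp [coverSum, minimalCovers_empty]

lemma coverSum_mono {p : ℝ} (hp : 0 ≤ p) {w w' : Finset α → ℝ} (h : ∀ C, w C ≤ w' C)
    (𝓖 : Finset (Finset α)) : coverSum p w 𝓖 ≤ coverSum p w' 𝓖 :=
  sum_le_sum fun C _ => mul_le_mul_of_nonneg_left (h C) (pow_nonneg hp _)

/-- Erasing `x` maps the minimal covers of `𝓖` through `x` injectively into the minimal covers
of the sets of `𝓖` avoiding `x`, and costs exactly one factor `p`. -/
lemma sum_minimalCovers_mem_le {p : ℝ} (hp : 0 ≤ p) (𝓖 : Finset (Finset α)) (x : α)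
    {g : Finset α → ℝ} (hg : ∀ D, 0 ≤ g D) :
    ∑ C ∈ (minimalCovers 𝓖).filter (x ∈ ·), p ^ C.card * g (C.erase x)
      ≤ p * coverSum p g (𝓖.filter (x ∉ ·)) := by
  set S := (minimalCovers 𝓖).filter (x ∈ ·)
  have hinj : Set.InjOn (fun C : Finset α => C.erase x) S := fun C₁ h₁ C₂ h₂ he => by
    rw [← insert_erase (mem_filter.mp h₁).2, ← insert_erase (mem_filter.mp h₂).2]
    exact congrArg (insert x) he
  have hmaps : S.image (fun C => C.erase x) ⊆ minimalCovers (𝓖.filter (x ∉ ·)) := by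
    intro D hD
    obtain ⟨C, hC, rfl⟩ := mem_image.mp hD
    exact erase_mem_minimalCovers (mem_filter.mp hC).1 (mem_filter.mp hC).2
  calc ∑ C ∈ S, p ^ C.card * g (C.erase x)
      = p * ∑ D ∈ S.image (fun C => C.erase x), p ^ D.card * g D := by
        rw [sum_image hinj, mul_sum]
        refine sum_congr rfl fun C hC => ?_
        rw [← card_erase_add_one (mem_filter.mp hC).2, pow_succ]
        ring
    _ ≤ p * coverSum p g (𝓖.filter (x ∉ ·)) :=
        mul_le_mul_of_nonneg_left (sum_le_sum_of_subset_of_nonneg hmaps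
          fun D _ _ => mul_nonneg (pow_nonneg hp _) (hg D)) hp

lemma coverSum_le_branch {p : ℝ} (hp : 0 ≤ p) {𝓖 : Finset (Finset α)} (B : Finset α)
    {w : Finset α → ℝ} {v : α → Finset α → ℝ} (hv : ∀ x D, 0 ≤ v x D)
    (hw : ∀ C ∈ minimalCovers 𝓖, w C ≤ ∑ x ∈ C ∩ B, v x (C.erase x)) :
    coverSum p w 𝓖 ≤ p * ∑ x ∈ B, coverSum p (v x) (𝓖.filter (x ∉ ·)) := by
  calc coverSum p w 𝓖
      ≤ ∑ C ∈ minimalCovers 𝓖, ∑ x ∈ C ∩ B, p ^ C.card * v x (C.erase x) := by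
        refine sum_le_sum fun C hC => ?_
        rw [← mul_sum]
        exact mul_le_mul_of_nonneg_left (hw C hC) (pow_nonneg hp _)
    _ = ∑ x ∈ B, ∑ C ∈ (minimalCovers 𝓖).filter (x ∈ ·), p ^ C.card * v x (C.erase x) :=
        sum_comm' fun C x => by simp only [mem_inter, mem_filter]; tauto
    _ ≤ ∑ x ∈ B, p * coverSum p (v x) (𝓖.filter (x ∉ ·)) :=
        sum_le_sum fun x _ => sum_minimalCovers_mem_le hp 𝓖 x (hv x)
    _ = p * ∑ x ∈ B, coverSum p (v x) (𝓖.filter (x ∉ ·)) := (mul_sum _ _ _).symm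

theorem coverSum_const_le {p : ℝ} (hp : 0 ≤ p) {c : ℝ} (hc : 0 ≤ c) (𝓖 : Finset (Finset α))
    (h𝓖 : ∀ A ∈ 𝓖, p * #A ≤ 1) : coverSum p (fun _ => c) 𝓖 ≤ c := by
  induction 𝓖 using Finset.strongInduction with
  | H 𝓖 ih =>
  rcases 𝓖.eq_empty_or_nonempty with rfl | ⟨B, hB⟩
  · exact (coverSum_empty p _).le
  have hw : ∀ C ∈ minimalCovers 𝓖, c ≤ ∑ x ∈ C ∩ B, c := fun C hC => by
    rw [sum_const, nsmul_eq_mul]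
    exact le_mul_of_one_le_left hc (by exact_mod_cast ((mem_minimalCovers.mp hC).1 B hB).card_pos)
  calc coverSum p (fun _ => c) 𝓖
      ≤ p * ∑ x ∈ B, coverSum p (fun _ => c) (𝓖.filter (x ∉ ·)) :=
        coverSum_le_branch hp B (fun _ _ => hc) hw
    _ ≤ p * ∑ _x ∈ B, c := by
        refine mul_le_mul_of_nonneg_left (sum_le_sum fun x hx => ?_) hp
        exact ih _ (filter_notMem_ssubset hB hx) fun A hA => h𝓖 A (mem_filter.mp hA).1
    _ = (p * #B) * c := by rw [sum_const, nsmul_eq_mul, mul_assoc]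
    _ ≤ c := mul_le_of_le_one_left hc (h𝓖 B hB)

end CoverSum

section MeetWeight

variable [DecidableEq α]

noncomputable def meetWeight (U C : Finset α) : ℝ := if Disjoint C U then 1 else 1 / 2

lemma meetWeight_empty (C : Finset α) : meetWeight ∅ C = 1 := by
  simp [meetWeight]

lemma meetWeight_le_one (U C : Finset α) : meetWeight U C ≤ 1 := by
  unfold meetWeight; split_ifs <;> norm_num

lemma half_le_meetWeight (U C : Finset α) : 1 / 2 ≤ meetWeight U C := by
  unfold meetWeight; split_ifs <;> norm_num

/-- If `C` meets `B` twice the half-weights already pay for `meetWeight U C ≤ 1`; if `C` meets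
`B` only in `x ∉ U`, then `C.erase x` is disjoint from `B ∪ U` exactly when `C` is disjoint from `U`. -/
lemma meetWeight_le_sum_inter {U B C : Finset α} (hCB : (C ∩ B).Nonempty) :
    meetWeight U C ≤
      ∑ x ∈ C ∩ B, if x ∈ U then 1 / 2 else meetWeight (B ∪ U) (C.erase x) := by
  have hterm : ∀ x ∈ C ∩ B,
      (1 / 2 : ℝ) ≤ if x ∈ U then 1 / 2 else meetWeight (B ∪ U) (C.erase x) := fun x _ => by
    split_ifs
    exacts [le_rfl, half_le_meetWeight _ _]
  obtain hone | htwo : #(C ∩ B) = 1 ∨ 2 ≤ #(C ∩ B) := by have := hCB.card_pos; omega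
  · obtain ⟨x, hx⟩ := card_eq_one.mp hone
    have hxC : x ∈ C := (mem_inter.mp (hx ▸ mem_singleton_self x)).1
    rw [hx, sum_singleton]
    split_ifs with hxU
    · rw [meetWeight, if_neg (not_disjoint_iff.mpr ⟨x, hxC, hxU⟩)]
    · by_cases hCU : Disjoint C U
      · have hB : Disjoint (C.erase x) B := by
          rw [disjoint_iff_inter_eq_empty, erase_inter, hx, erase_singleton]
        rw [meetWeight, meetWeight, if_pos hCU,
          if_pos (disjoint_union_right.mpr ⟨hB, hCU.mono_left (erase_subset x C)⟩)]
      · rw [meetWeight, if_neg hCU]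
        exact half_le_meetWeight _ _
  · calc meetWeight U C ≤ #(C ∩ B) • (1 / 2 : ℝ) := by
          have : (2 : ℝ) ≤ #(C ∩ B) := by exact_mod_cast htwo
          rw [nsmul_eq_mul]
          linarith [meetWeight_le_one U C]
      _ ≤ _ := card_nsmul_le_sum _ _ _ hterm

end MeetWeight

lemma sum_range_succ_add (t m : ℕ) :
    ∑ i ∈ range (m + 1), (t + i) = t + ∑ i ∈ range m, (t + 1 + i) := by
  rw [sum_range_succ', add_zero, add_comm]
  exact congrArg (t + ·) (sum_congr rfl fun i _ => by omega)

lemma exp_neg_sum_range_succ (a t m : ℕ) :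
    Real.exp (-((∑ i ∈ range (m + 1), (t + i) : ℕ) : ℝ) / a)
      = Real.exp (-(t : ℝ) / a) * Real.exp (-((∑ i ∈ range m, (t + 1 + i) : ℕ) : ℝ) / a) := by
  rw [sum_range_succ_add, Nat.cast_add, neg_add, add_div, Real.exp_add]

section Branching

variable [Fintype α] [DecidableEq α] {n k : ℕ} {𝓑 : Finset (Finset α)}

/-- One branching step along `B ∉ 𝓣`: a point `x ∈ B ∩ U` costs `1 / (2n)` by the unweighted
bound, while `B` meets every member of `𝓣` inside `U = ⋃ 𝓣`, so that at most a fraction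
`e^{-#𝓣 / ((k - 1) n)}` of the points of `B` lie outside `U`. -/
theorem coverSum_meetWeight_le_of_branch (hunif : ∀ B ∈ 𝓑, #B = n)
    (hint : ∀ B₁ ∈ 𝓑, ∀ B₂ ∈ 𝓑, (B₁ ∩ B₂).Nonempty) (hdeg : ∀ x, #(𝓑.filter (x ∈ ·)) ≤ k)
    {𝓖 𝓣 : Finset (Finset α)} (h𝓖 : 𝓖 ⊆ 𝓑) (h𝓣 : 𝓣 ⊆ 𝓑) {B : Finset α} (hB : B ∈ 𝓖)
    (hB𝓣 : B ∉ 𝓣) {β : ℝ} (hβ : 0 ≤ β)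
    (hchild : ∀ x ∈ B, x ∉ 𝓣.biUnion id →
      coverSum (n : ℝ)⁻¹ (meetWeight (B ∪ 𝓣.biUnion id)) (𝓖.filter (x ∉ ·)) ≤ (1 + β) / 2) :
    coverSum (n : ℝ)⁻¹ (meetWeight (𝓣.biUnion id)) 𝓖
      ≤ (1 + Real.exp (-(#𝓣 : ℝ) / ((k - 1) * n : ℕ)) * β) / 2 := by
  set p : ℝ := (n : ℝ)⁻¹
  set U := 𝓣.biUnion id
  set e := Real.exp (-(#𝓣 : ℝ) / ((k - 1) * n : ℕ))
  have hp : 0 ≤ p := by positivity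
  have hpn : p * n ≤ 1 := inv_mul_le_one_of_le₀ le_rfl n.cast_nonneg
  set v : α → Finset α → ℝ := fun x => if x ∈ U then fun _ => 1 / 2 else meetWeight (B ∪ U)
  have hv : ∀ x D, 0 ≤ v x D := fun x D => by
    simp only [v]; split_ifs
    exacts [by norm_num, (by norm_num : (0 : ℝ) ≤ 1 / 2).trans (half_le_meetWeight _ _)]
  have hw : ∀ C ∈ minimalCovers 𝓖, meetWeight U C ≤ ∑ x ∈ C ∩ B, v x (C.erase x) :=
    fun C hC => (meetWeight_le_sum_inter ((mem_minimalCovers.mp hC).1 B hB)).trans_eq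
      (sum_congr rfl fun x _ => by simp only [v]; split_ifs <;> rfl)
  have hpoint : ∀ x ∈ B, coverSum p (v x) (𝓖.filter (x ∉ ·))
      ≤ if x ∈ U then 1 / 2 else (1 + β) / 2 := fun x hxB => by
    by_cases hxU : x ∈ U
    · simp only [v, hxU, if_true]
      refine coverSum_const_le hp (by norm_num) _ fun A hA => ?_
      rw [hunif A (h𝓖 (mem_filter.mp hA).1)]
      exact hpn
    · simp only [v, hxU, if_false]
      exact hchild x hxB hxU
  have hMK : #(B.filter (· ∈ U)) + #(B.filter (· ∉ U)) = n :=
    (card_filter_add_card_filter_not _).trans (hunif B (h𝓖 hB))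
  have hpK : p * #(B.filter (· ∉ U)) ≤ e := by
    have hK := card_filter_notMem_biUnion_le (fun T hT => hint B (h𝓖 hB) T (h𝓣 hT)) hdeg h𝓣
      (h𝓖 hB) hB𝓣
    rw [hunif B (h𝓖 hB)] at hK
    calc p * #(B.filter (· ∉ U)) ≤ p * (e * n) := mul_le_mul_of_nonneg_left hK hp
      _ = e * (p * n) := by ring
      _ ≤ e := mul_le_of_le_one_right (Real.exp_pos _).le hpn
  calc coverSum p (meetWeight U) 𝓖
      ≤ p * ∑ x ∈ B, coverSum p (v x) (𝓖.filter (x ∉ ·)) := coverSum_le_branch hp B hv hw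
    _ ≤ p * ∑ x ∈ B, if x ∈ U then 1 / 2 else (1 + β) / 2 :=
        mul_le_mul_of_nonneg_left (sum_le_sum hpoint) hp
    _ = (p * (#(B.filter (· ∈ U)) + #(B.filter (· ∉ U)) : ℕ)
          + p * #(B.filter (· ∉ U)) * β) / 2 := by
        rw [sum_ite, sum_const, sum_const, nsmul_eq_mul, nsmul_eq_mul]
        push_cast
        ring
    _ ≤ (1 + e * β) / 2 := by
        rw [hMK]
        linarith [mul_le_mul_of_nonneg_right hpK hβ]

/-- Each branching discards at most `k` members, so `⌈#𝓖 / k⌉` branchings are available: this is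
the condition `k * m < #𝓖 + k`. -/
theorem coverSum_meetWeight_le (hunif : ∀ B ∈ 𝓑, #B = n)
    (hint : ∀ B₁ ∈ 𝓑, ∀ B₂ ∈ 𝓑, (B₁ ∩ B₂).Nonempty) (hdeg : ∀ x, #(𝓑.filter (x ∈ ·)) ≤ k)
    {𝓖 : Finset (Finset α)} (h𝓖 : 𝓖 ⊆ 𝓑) {𝓣 : Finset (Finset α)} (h𝓣 : 𝓣 ⊆ 𝓑)
    (hdisj : Disjoint 𝓣 𝓖) {m : ℕ} (hm : k * m < #𝓖 + k) :
    coverSum (n : ℝ)⁻¹ (meetWeight (𝓣.biUnion id)) 𝓖 ≤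
      (1 + Real.exp (-((∑ i ∈ range m, (#𝓣 + i) : ℕ) : ℝ) / ((k - 1) * n : ℕ))) / 2 := by
  induction 𝓖 using Finset.strongInduction generalizing 𝓣 m with
  | H 𝓖 ih =>
  cases m with
  | zero =>
    have hp : (0 : ℝ) ≤ (n : ℝ)⁻¹ := by positivity
    calc coverSum (n : ℝ)⁻¹ (meetWeight (𝓣.biUnion id)) 𝓖
        ≤ coverSum (n : ℝ)⁻¹ (fun _ => 1) 𝓖 := coverSum_mono hp (meetWeight_le_one _) 𝓖
      _ ≤ 1 := coverSum_const_le hp zero_le_one 𝓖 fun A hA => by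
          rw [hunif A (h𝓖 hA)]; exact inv_mul_le_one_of_le₀ le_rfl n.cast_nonneg
      _ = _ := by norm_num
  | succ m =>
  rw [mul_add_one] at hm
  obtain ⟨B, hB⟩ : 𝓖.Nonempty := card_pos.mp (by omega)
  have hB𝓣 : B ∉ 𝓣 := disjoint_right.mp hdisj hB
  rw [exp_neg_sum_range_succ]
  refine coverSum_meetWeight_le_of_branch hunif hint hdeg h𝓖 h𝓣 hB hB𝓣 (Real.exp_pos _).le
    fun x hxB _ => ?_
  have hcard : k * m < #(𝓖.filter (x ∉ ·)) + k := by
    have := card_le_card_filter_notMem_add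
      (fun y => (card_le_card (filter_subset_filter _ h𝓖)).trans (hdeg y)) x
    omega
  have hdisj' : Disjoint (insert B 𝓣) (𝓖.filter (x ∉ ·)) :=
    disjoint_insert_left.mpr
      ⟨fun h => (mem_filter.mp h).2 hxB, hdisj.mono_right (filter_subset _ 𝓖)⟩
  have := ih _ (filter_notMem_ssubset hB hxB) ((filter_subset _ 𝓖).trans h𝓖)
    (insert_subset (h𝓖 hB) h𝓣) hdisj' hcard
  rwa [biUnion_insert, card_insert_of_notMem hB𝓣] at this

end Branching

lemma covWeight_le_coverSum [Fintype α] [DecidableEq α] (n : ℕ) {lam : ℝ} (hlam : 0 ≤ lam)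
    (𝓕 : Finset (Finset α)) : covWeight n lam 𝓕 ≤ coverSum lam⁻¹ (fun _ => 1) 𝓕 := by
  unfold covWeight coverSum
  simp only [zpow_neg, zpow_natCast, ← inv_pow, mul_one]
  exact sum_le_sum_of_subset_of_nonneg (minCovers_subset_minimalCovers n 𝓕)
    fun C _ _ => by positivity

lemma exists_mul_mem_Ico {k : ℕ} (hk : 0 < k) (r : ℕ) : ∃ m, r ≤ k * m ∧ k * m < r + k := by
  refine ⟨(r + k - 1) / k, ?_, ?_⟩
  · have h1 := Nat.div_add_mod (r + k - 1) k
    have h2 := Nat.mod_lt (r + k - 1) hk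
    omega
  · have := Nat.div_mul_le_self (r + k - 1) k
    rw [mul_comm]
    omega

lemma five_halves_mul_sq_div_le {l n r m : ℕ} (hl : 3 ≤ l) (hn : 0 < n) (hrm : r ≤ (l - 1) * m)
    (hm : 2 ≤ m) :
    5 / 2 * ((r : ℝ) ^ 2 / (10 * l ^ 3 * n))
      ≤ ((∑ i ∈ range m, i : ℕ) : ℝ) / ((l - 1 - 1) * n : ℕ) := by
  have hsum : ((∑ i ∈ range m, i : ℕ) : ℝ) = m * (m - 1) / 2 := by
    have := congrArg (Nat.cast : ℕ → ℝ) (sum_range_id_mul_two m)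
    push_cast [Nat.cast_sub (by omega : 1 ≤ m)] at this ⊢
    linarith
  have hr : (r : ℝ) ≤ (l - 1) * m := by
    have : ((r : ℕ) : ℝ) ≤ ((l - 1) * m : ℕ) := by exact_mod_cast hrm
    push_cast [Nat.cast_sub (by omega : 1 ≤ l)] at this
    exact this
  have hl' : (3 : ℝ) ≤ l := by exact_mod_cast hl
  have hm' : (2 : ℝ) ≤ m := by exact_mod_cast hm
  have hn' : (0 : ℝ) < n := by exact_mod_cast hn
  have hl2 : ((l - 1 - 1 : ℕ) : ℝ) = l - 2 := by
    rw [Nat.cast_sub (by omega), Nat.cast_sub (by omega)]; ring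
  have hr2 : (r : ℝ) ^ 2 ≤ (l - 1) ^ 2 * m ^ 2 := by
    rw [← mul_pow]; exact pow_le_pow_left₀ (Nat.cast_nonneg r) hr 2
  have hcube : ((l : ℝ) - 2) * (l - 1) ^ 2 ≤ l ^ 3 := by nlinarith
  have hsq : (m : ℝ) ^ 2 ≤ 2 * (m * (m - 1)) := by nlinarith
  rw [hsum, Nat.cast_mul, hl2, div_div,
    show 5 / 2 * ((r : ℝ) ^ 2 / (10 * l ^ 3 * n)) = r ^ 2 / (4 * l ^ 3 * n) by ring,
    div_le_div_iff₀ (by positivity) (by nlinarith)]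
  calc (r : ℝ) ^ 2 * (2 * ((l - 2) * n))
      ≤ ((l : ℝ) - 1) ^ 2 * m ^ 2 * (2 * ((l - 2) * n)) :=
        mul_le_mul_of_nonneg_right hr2 (by nlinarith)
    _ = (((l : ℝ) - 2) * (l - 1) ^ 2) * ((m : ℝ) ^ 2 * (2 * n)) := by ring
    _ ≤ (l : ℝ) ^ 3 * (2 * (m * (m - 1)) * (2 * n)) := by gcongr
    _ = m * (m - 1) * (4 * l ^ 3 * n) := by ring

lemma one_add_exp_neg_five_halves_div_two_le {d : ℝ} (hd₀ : 0 ≤ d) (hd₁ : d ≤ 1 / 10) :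
    (1 + Real.exp (-(5 / 2 * d))) / 2 ≤ Real.exp (-d) := by
  have hprod : Real.exp (-(5 / 2 * d)) * Real.exp (5 / 2 * d) = 1 := by
    rw [← Real.exp_add, neg_add_cancel, Real.exp_zero]
  have hlow := Real.add_one_le_exp (5 / 2 * d)
  have hsmall : Real.exp (-(5 / 2 * d)) ≤ 1 - 2 * d := by
    nlinarith [Real.exp_pos (-(5 / 2 * d)), mul_le_mul_of_nonneg_left hlow
      (Real.exp_pos (-(5 / 2 * d))).le]
  linarith [Real.add_one_le_exp (-d)]

theorem stmt13 [Fintype α] [DecidableEq α] (n l r : ℕ) (hn : 1 ≤ n) (hl : 1 ≤ l)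
    (hr : 2 * l ≤ r) (hrn : r ^ 2 ≤ l ^ 3 * n)
    (𝓑 : Finset (Finset α)) (hcard : 𝓑.card = r) (hunif : ∀ B ∈ 𝓑, B.card = n)
    (hint : ∀ B1 ∈ 𝓑, ∀ B2 ∈ 𝓑, (B1 ∩ B2).Nonempty)
    (hdeg : ∀ 𝓢 ⊆ 𝓑, 𝓢.card = l → ∀ x : α, ¬ ∀ B ∈ 𝓢, x ∈ B) :
    covWeight n (n : ℝ) 𝓑 ≤ Real.exp (-(r : ℝ) ^ 2 / (10 * (l : ℝ) ^ 3 * n)) := by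
  have hl3 : 3 ≤ l := three_le_of_intersecting hl (by omega) hint hdeg
  have hdeg' : ∀ x, #(𝓑.filter (x ∈ ·)) ≤ l - 1 := fun x => by
    have := card_filter_mem_lt hdeg x; omega
  obtain ⟨m, hrm, hmr⟩ := exists_mul_mem_Ico (by omega : 0 < l - 1) r
  have hm : 2 ≤ m := by
    by_contra! h
    interval_cases m <;> omega
  set d : ℝ := (r : ℝ) ^ 2 / (10 * l ^ 3 * n)
  have hd₁ : d ≤ 1 / 10 := by
    rw [div_le_iff₀ (by positivity)]
    have : ((r ^ 2 : ℕ) : ℝ) ≤ (l ^ 3 * n : ℕ) := by exact_mod_cast hrn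
    push_cast at this
    linarith
  have hbranch := coverSum_meetWeight_le hunif hint hdeg' subset_rfl (empty_subset 𝓑)
    (disjoint_empty_left 𝓑) (m := m) (by omega)
  simp only [biUnion_empty, card_empty, zero_add, funext meetWeight_empty] at hbranch
  calc covWeight n (n : ℝ) 𝓑 ≤ coverSum (n : ℝ)⁻¹ (fun _ => 1) 𝓑 :=
        covWeight_le_coverSum n n.cast_nonneg 𝓑
    _ ≤ _ := hbranch
    _ ≤ (1 + Real.exp (-(5 / 2 * d))) / 2 := by
        gcongr
        rw [neg_div, neg_le_neg_iff]
        exact five_halves_mul_sq_div_le hl3 hn hrm hm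
    _ ≤ Real.exp (-d) := one_add_exp_neg_five_halves_div_two_le (by positivity) hd₁
    _ = _ := by rw [neg_div]
end

section
/- Let $\mathcal{A}$ be an $n$-uniform intersecting family such that no two members $A_1,A_2\in\mathcal{A}$ satisfy $k\le|A_1\cap A_2|\le n-k$, where $0<k\le n/4$. Define a relation $\sim$ on $\mathcal{A}$ by $A_1\sim A_2$ if $|A_1\cap A_2|\ge n/2$. Then $\sim$ is an equivalence relation on $\mathcal{A}$. -/
/- Since `k ≤ n / 4`, related members meet in more than `n - k` elements; two such overlaps
inside the `n`-set `B` force `|A ∩ C| > n - 2k ≥ n / 2`. -/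

open Finset

variable {α : Type*}

theorem Finset.card_inter_add_card_inter_le [DecidableEq α] (s t u : Finset α) :
    #(s ∩ t) + #(t ∩ u) ≤ #t + #(s ∩ u) := by
  have hunion : #(s ∩ t ∪ t ∩ u) ≤ #t :=
    card_le_card (union_subset inter_subset_right inter_subset_left)
  have hinter : #(s ∩ t ∩ (t ∩ u)) ≤ #(s ∩ u) :=
    card_le_card (inter_subset_inter inter_subset_left inter_subset_right)
  rw [← card_union_add_card_inter]
  omega

theorem stmt17_general [DecidableEq α] (n : ℕ) (k : ℝ)
    (hk : k ≤ (n : ℝ) / 4) (𝓐 : Finset (Finset α)) (hunif : ∀ A ∈ 𝓐, A.card = n)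
    (hgap : ∀ A1 ∈ 𝓐, ∀ A2 ∈ 𝓐,
      ¬(k ≤ ((A1 ∩ A2).card : ℝ) ∧ ((A1 ∩ A2).card : ℝ) ≤ (n : ℝ) - k)) :
    Equivalence (fun A B : {A // A ∈ 𝓐} => (n : ℝ) / 2 ≤ ((A.1 ∩ B.1).card : ℝ)) := by
  have large_of_related : ∀ A ∈ 𝓐, ∀ B ∈ 𝓐, (n : ℝ) / 2 ≤ #(A ∩ B) → (n : ℝ) - k < #(A ∩ B) :=
    fun A hA B hB hAB => by
      by_contra! hsmall
      exact hgap A hA B hB ⟨by linarith, hsmall⟩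
  refine ⟨fun A => ?_, fun hAB => ?_, fun {A B C} hAB hBC => ?_⟩
  · rw [inter_self, hunif A.1 A.2]
    linarith [(n.cast_nonneg : (0 : ℝ) ≤ n)]
  · rwa [inter_comm]
  · have hAB_large := large_of_related A.1 A.2 B.1 B.2 hAB
    have hBC_large := large_of_related B.1 B.2 C.1 C.2 hBC
    have hsum : (#(A.1 ∩ B.1) : ℝ) + #(B.1 ∩ C.1) ≤ n + #(A.1 ∩ C.1) := by
      exact_mod_cast hunif B.1 B.2 ▸ card_inter_add_card_inter_le A.1 B.1 C.1
    linarith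

theorem stmt17 [Fintype α] [DecidableEq α] (n : ℕ) (k : ℝ) (hk0 : 0 < k)
    (hk : k ≤ (n : ℝ) / 4) (𝓐 : Finset (Finset α)) (hunif : ∀ A ∈ 𝓐, A.card = n)
    (hint : ∀ A1 ∈ 𝓐, ∀ A2 ∈ 𝓐, (A1 ∩ A2).Nonempty)
    (hgap : ∀ A1 ∈ 𝓐, ∀ A2 ∈ 𝓐,
      ¬(k ≤ ((A1 ∩ A2).card : ℝ) ∧ ((A1 ∩ A2).card : ℝ) ≤ (n : ℝ) - k)) :
    Equivalence (fun A B : {A // A ∈ 𝓐} => (n : ℝ) / 2 ≤ ((A.1 ∩ B.1).card : ℝ)) :=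
  stmt17_general n k hk 𝓐 hunif hgap
end
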